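/- arXiv:2508.08160 — 2 statements merged into one kernel-verified Lean document; each statement's English description precedes it below -/
import Mathlib

section
/- Under the subspace amplitude-amplification hypotheses, let P_{𝒮⊥} be the orthogonal projection of H_S onto the orthogonal complement of 𝒮, and define R_Φ := 1_S ⊗ 2|0⟩⟨0| − 1, R_Ψ := (1_S ⊗ 2|0⟩⟨0| − 1) ∘ (1 − P_{𝒮⊥} ⊗ 2|0⟩⟨0|), and G := −U ∘ R_Ψ ∘ U† ∘ R_Φ. Then for every natural number ℓ and every unit vector ψ ∈ 𝒮, G^ℓ (U (ψ ⊗ |0⟩)) = sin((2ℓ+1)θ) • Φψ + cos((2ℓ+1)θ) • Φψ⊥. -/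
open Matrix Kronecker

/-- Kronecker (tensor) product of vectors: `(x ⊗ y) (a, b) = x a * y b`. -/
noncomputable def vecTensor {n m : Type*} (x : EuclideanSpace ℂ n) (y : EuclideanSpace ℂ m) :
    EuclideanSpace ℂ (n × m) :=
  WithLp.toLp 2 (fun p : n × m => x p.1 * y p.2)

/-- The matrix of the orthogonal projection of `ℂ^n` onto the orthogonal complement of the
subspace `𝒮`. -/
noncomputable def projPerpMatrix {n : ℕ} (𝒮 : Submodule ℂ (EuclideanSpace ℂ (Fin n))) :
    Matrix (Fin n) (Fin n) ℂ :=
  Matrix.toEuclideanLin.symm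
    (𝒮ᗮ.subtype ∘ₗ (𝒮ᗮ.orthogonalProjection :
      EuclideanSpace ℂ (Fin n) →L[ℂ] 𝒮ᗮ).toLinearMap)

open scoped ComplexConjugate

namespace SAA
set_option linter.unusedSectionVars false

variable {ι κ ρ σ : Type*} [Fintype ι] [DecidableEq ι] [Fintype κ] [DecidableEq κ]
  [Fintype ρ] [DecidableEq ρ] [Fintype σ] [DecidableEq σ]

lemma tl_apply (A : Matrix ι κ ℂ) (v : EuclideanSpace ℂ κ) (i : ι) :
    Matrix.toEuclideanLin A v i = ∑ j, A i j * v j := rfl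

lemma tl_mul (A : Matrix ι ι ℂ) (B : Matrix ι κ ℂ) (v : EuclideanSpace ℂ κ) :
    Matrix.toEuclideanLin (A * B) v = Matrix.toEuclideanLin A (Matrix.toEuclideanLin B v) := by
  rw [Matrix.toEuclideanLin_apply, Matrix.toEuclideanLin_apply, Matrix.toEuclideanLin_apply]
  simp [Matrix.mulVec_mulVec]

lemma tl_one (v : EuclideanSpace ℂ ι) :
    Matrix.toEuclideanLin (1 : Matrix ι ι ℂ) v = v := by
  rw [Matrix.toEuclideanLin_apply]
  simp

lemma inner_eq (x y : EuclideanSpace ℂ ι) : (inner ℂ x y : ℂ) = ∑ i, conj (x i) * y i := by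
  simp [PiLp.inner_apply, RCLike.inner_apply, mul_comm]

lemma smul_apply' (c : ℂ) (x : EuclideanSpace ℂ ι) (i : ι) : (c • x) i = c * x i := rfl
lemma add_apply' (x y : EuclideanSpace ℂ ι) (i : ι) : (x + y) i = x i + y i := rfl
lemma sub_apply' (x y : EuclideanSpace ℂ ι) (i : ι) : (x - y) i = x i - y i := rfl

lemma tensor_inner (x x' : EuclideanSpace ℂ ι) (y y' : EuclideanSpace ℂ κ) :
    (inner ℂ (vecTensor x y) (vecTensor x' y') : ℂ) = (inner ℂ x x' : ℂ) * (inner ℂ y y' : ℂ) := by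
  simp only [inner_eq, vecTensor]
  rw [Finset.sum_mul_sum]
  rw [Fintype.sum_prod_type]
  apply Finset.sum_congr rfl; intro a _
  apply Finset.sum_congr rfl; intro b _
  simp only [_root_.map_mul]
  ring

lemma tl_kron (A : Matrix ι κ ℂ) (B : Matrix ρ σ ℂ)
    (x : EuclideanSpace ℂ κ) (y : EuclideanSpace ℂ σ) :
    Matrix.toEuclideanLin (A ⊗ₖ B) (vecTensor x y)
      = vecTensor (Matrix.toEuclideanLin A x) (Matrix.toEuclideanLin B y) := by
  ext p
  obtain ⟨a, b⟩ := p
  show ∑ q : κ × σ, (A ⊗ₖ B) (a, b) q * (x q.1 * y q.2) = _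
  rw [Fintype.sum_prod_type]
  show _ = (∑ c, A a c * x c) * (∑ d, B b d * y d)
  rw [Finset.sum_mul_sum]
  apply Finset.sum_congr rfl
  intro c _
  apply Finset.sum_congr rfl
  intro d _
  simp [Matrix.kroneckerMap_apply]
  ring

noncomputable def P0 (zero : EuclideanSpace ℂ κ) : Matrix κ κ ℂ :=
  Matrix.of fun a b => zero a * star (zero b)

lemma vecTensor_smul (c : ℂ) (x : EuclideanSpace ℂ ι) (y : EuclideanSpace ℂ κ) :
    vecTensor (c • x) y = c • vecTensor x y := by
  ext p; simp [vecTensor, smul_apply', mul_assoc]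

lemma vecTensor_add (x x' : EuclideanSpace ℂ ι) (y : EuclideanSpace ℂ κ) :
    vecTensor (x + x') y = vecTensor x y + vecTensor x' y := by
  ext p; simp [vecTensor, add_apply']; ring

lemma vecTensor_zero (y : EuclideanSpace ℂ κ) :
    vecTensor (0 : EuclideanSpace ℂ ι) y = 0 := by
  ext p
  show (0 : EuclideanSpace ℂ ι) p.1 * y p.2 = (0 : EuclideanSpace ℂ (ι × κ)) p
  simp

lemma tl_P0 (zero y : EuclideanSpace ℂ κ) :
    Matrix.toEuclideanLin (P0 zero) y = (inner ℂ zero y : ℂ) • zero := by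
  ext a
  rw [tl_apply, smul_apply', inner_eq]
  rw [Finset.sum_mul]
  apply Finset.sum_congr rfl
  intro b _
  simp [P0]
  ring

lemma inner_zero_self (zero : EuclideanSpace ℂ κ) (hzero : ‖zero‖ = 1) :
    (inner ℂ zero zero : ℂ) = 1 := by
  rw [inner_self_eq_norm_sq_to_K, hzero]; norm_num

lemma P0_mul_P0 (zero : EuclideanSpace ℂ κ) (hzero : ‖zero‖ = 1) :
    P0 zero * P0 zero = P0 zero := by
  have h1 : (inner ℂ zero zero : ℂ) = 1 := inner_zero_self zero hzero
  rw [inner_eq] at h1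
  ext a b
  rw [Matrix.mul_apply]
  show ∑ c, (zero a * conj (zero c)) * (zero c * conj (zero b)) = zero a * conj (zero b)
  calc ∑ c, (zero a * conj (zero c)) * (zero c * conj (zero b))
      = (zero a * conj (zero b)) * ∑ c, conj (zero c) * zero c := by
        rw [Finset.mul_sum]; apply Finset.sum_congr rfl; intro c _; ring
    _ = zero a * conj (zero b) := by rw [h1, mul_one]

lemma tl_adj (A : Matrix ι κ ℂ) (x : EuclideanSpace ℂ ι) (y : EuclideanSpace ℂ κ) :
    (inner ℂ (Matrix.toEuclideanLin Aᴴ x) y : ℂ) = inner ℂ x (Matrix.toEuclideanLin A y) := by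
  rw [Matrix.toEuclideanLin_conjTranspose_eq_adjoint]
  exact LinearMap.adjoint_inner_left _ _ _

lemma tl_adj' (A : Matrix ι κ ℂ) (x : EuclideanSpace ℂ κ) (y : EuclideanSpace ℂ ι) :
    (inner ℂ (Matrix.toEuclideanLin A x) y : ℂ) = inner ℂ x (Matrix.toEuclideanLin Aᴴ y) := by
  conv_lhs => rw [← Matrix.conjTranspose_conjTranspose A]
  exact tl_adj Aᴴ x y

lemma tl_adj2 (A : Matrix ι κ ℂ) (x : EuclideanSpace ℂ κ) (y : EuclideanSpace ℂ ι) :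
    (inner ℂ x (Matrix.toEuclideanLin Aᴴ y) : ℂ) = inner ℂ (Matrix.toEuclideanLin A x) y := by
  rw [← inner_conj_symm, tl_adj, inner_conj_symm]

noncomputable def wv (zero : EuclideanSpace ℂ κ) (v : EuclideanSpace ℂ (ι × κ)) :
    EuclideanSpace ℂ ι :=
  WithLp.toLp 2 (fun a => ∑ d, conj (zero d) * v (a, d))

lemma tl_one_kron_P0 (zero : EuclideanSpace ℂ κ) (v : EuclideanSpace ℂ (ι × κ)) :
    Matrix.toEuclideanLin ((1 : Matrix ι ι ℂ) ⊗ₖ P0 zero) v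
      = vecTensor (wv zero v) zero := by
  ext p
  obtain ⟨a, b⟩ := p
  show ∑ q : ι × κ, ((1 : Matrix ι ι ℂ) ⊗ₖ P0 zero) (a, b) q * v q
      = wv zero v a * zero b
  rw [Fintype.sum_prod_type]
  have key : ∀ c : ι, ∑ d, ((1 : Matrix ι ι ℂ) ⊗ₖ P0 zero) (a, b) (c, d) * v (c, d)
      = (if c = a then wv zero v a * zero b else 0) := by
    intro c
    by_cases h : c = a
    · subst h
      simp only [Matrix.kroneckerMap_apply, Matrix.one_apply_eq, one_mul, P0, Matrix.of_apply,
        if_pos rfl, wv, Finset.sum_mul]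
      apply Finset.sum_congr rfl; intro d _
      simp; ring
    · simp [Matrix.kroneckerMap_apply, Matrix.one_apply, Ne.symm h, h]
  rw [Finset.sum_congr rfl (fun c _ => key c), Finset.sum_ite_eq' Finset.univ a]
  simp

lemma inner_tensor_w (zero : EuclideanSpace ℂ κ) (x : EuclideanSpace ℂ ι)
    (v : EuclideanSpace ℂ (ι × κ)) :
    (inner ℂ (vecTensor x zero) v : ℂ) = inner ℂ x (wv zero v) := by
  rw [inner_eq, inner_eq, Fintype.sum_prod_type]
  apply Finset.sum_congr rfl; intro a _
  show _ = conj (x a) * wv zero v a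
  rw [wv, Finset.mul_sum]
  apply Finset.sum_congr rfl; intro d _
  simp only [vecTensor, _root_.map_mul]
  ring

lemma tl_projPerp {n : ℕ} (𝒮 : Submodule ℂ (EuclideanSpace ℂ (Fin n)))
    (x : EuclideanSpace ℂ (Fin n)) :
    Matrix.toEuclideanLin (projPerpMatrix 𝒮) x
      = (𝒮ᗮ.orthogonalProjectionOnto x : EuclideanSpace ℂ (Fin n)) := by
  rw [projPerpMatrix, LinearEquiv.apply_symm_apply]
  rfl

lemma tl_projPerp_mem {n : ℕ} (𝒮 : Submodule ℂ (EuclideanSpace ℂ (Fin n)))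
    {x : EuclideanSpace ℂ (Fin n)} (hx : x ∈ 𝒮) :
    Matrix.toEuclideanLin (projPerpMatrix 𝒮) x = 0 := by
  rw [tl_projPerp,
    Submodule.orthogonalProjectionOnto_apply_of_mem_orthogonal
      (𝒮.le_orthogonal_orthogonal hx)]
  rfl

lemma tl_projPerp_orth {n : ℕ} (𝒮 : Submodule ℂ (EuclideanSpace ℂ (Fin n)))
    {x : EuclideanSpace ℂ (Fin n)} (hx : ∀ φ ∈ 𝒮, (inner ℂ φ x : ℂ) = 0) :
    Matrix.toEuclideanLin (projPerpMatrix 𝒮) x = x := by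
  rw [tl_projPerp, ← Submodule.starProjection_apply]
  exact Submodule.starProjection_eq_self_iff.mpr ((𝒮.mem_orthogonal x).mpr hx)

end SAA

set_option maxHeartbeats 1000000 in
/-- **Subspace amplitude amplification** (Corollary 1 of the supplemental material):
iterating the Grover-type rotation `G := −U R_Ψ U† R_Φ` rotates
`U (ψ ⊗ |0⟩) = sin θ • Φψ + cos θ • Φψ⊥` into
`sin ((2ℓ+1)θ) • Φψ + cos ((2ℓ+1)θ) • Φψ⊥`. -/
theorem subspace_amplitude_amplification
    (n m : ℕ) (hn : 1 ≤ n) (hm : 1 ≤ m)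
    (U : Matrix (Fin n × Fin m) (Fin n × Fin m) ℂ)
    (hU : U ∈ Matrix.unitaryGroup (Fin n × Fin m) ℂ)
    (M : Matrix (Fin n) (Fin n) ℂ)
    (𝒮 : Submodule ℂ (EuclideanSpace ℂ (Fin n)))
    (θ : ℝ) (hsin : Real.sin θ ≠ 0) (hcos : Real.cos θ ≠ 0)
    (zero : EuclideanSpace ℂ (Fin m)) (hzero : ‖zero‖ = 1)
    (hM : ∀ ψ ∈ 𝒮, ∀ ψ' ∈ 𝒮,
      (inner ℂ ψ' (Matrix.toEuclideanLin (Mᴴ * M) ψ) : ℂ) = inner ℂ ψ' ψ)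
    (Φperp : EuclideanSpace ℂ (Fin n) → EuclideanSpace ℂ (Fin n × Fin m))
    (hUact : ∀ ψ ∈ 𝒮, ‖ψ‖ = 1 →
      Matrix.toEuclideanLin U (vecTensor ψ zero) =
        Real.sin θ • vecTensor (Matrix.toEuclideanLin M ψ) zero + Real.cos θ • Φperp ψ)
    (hperp : ∀ ψ ∈ 𝒮, ‖ψ‖ = 1 →
      (inner ℂ (Φperp ψ) (vecTensor (Matrix.toEuclideanLin M ψ) zero) : ℂ) = 0)
    (hanc : ∀ ψ ∈ 𝒮, ‖ψ‖ = 1 →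
      Matrix.toEuclideanLin
        ((1 : Matrix (Fin n) (Fin n) ℂ) ⊗ₖ (Matrix.of fun a b : Fin m => zero a * star (zero b)))
        (Φperp ψ) = 0) :
    ∀ ℓ : ℕ, ∀ ψ ∈ 𝒮, ‖ψ‖ = 1 →
      Matrix.toEuclideanLin
          ((-(U *
            ((((1 : Matrix (Fin n) (Fin n) ℂ) ⊗ₖ
                ((2 : ℂ) • Matrix.of fun a b : Fin m => zero a * star (zero b)) - 1)) *
              (1 - projPerpMatrix 𝒮 ⊗ₖ
                ((2 : ℂ) • Matrix.of fun a b : Fin m => zero a * star (zero b)))) *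
            Uᴴ *
            ((1 : Matrix (Fin n) (Fin n) ℂ) ⊗ₖ
              ((2 : ℂ) • Matrix.of fun a b : Fin m => zero a * star (zero b)) - 1))) ^ ℓ)
          (Matrix.toEuclideanLin U (vecTensor ψ zero))
        = Real.sin (((2 * ℓ + 1 : ℕ) : ℝ) * θ)
              • vecTensor (Matrix.toEuclideanLin M ψ) zero
          + Real.cos (((2 * ℓ + 1 : ℕ) : ℝ) * θ) • Φperp ψ := by
  classical
  have hP0eq : (Matrix.of fun a b : Fin m => zero a * star (zero b)) = SAA.P0 zero := rfl
  simp only [hP0eq] at hanc ⊢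
  have h1 : (inner ℂ zero zero : ℂ) = 1 := SAA.inner_zero_self zero hzero
  have hzne : zero ≠ 0 := by
    intro h; rw [h] at hzero; simp at hzero
  have rs : ∀ (r : ℝ) (v : EuclideanSpace ℂ (Fin n × Fin m)), r • v = (r : ℂ) • v := by
    intro r v; ext i
    show r • v i = (r : ℂ) * v i
    rw [Complex.real_smul]
  have hU1 : Uᴴ * U = 1 := by
    have := (Unitary.mem_iff.mp hU).1
    rwa [Matrix.star_eq_conjTranspose] at this
  have hU2 : U * Uᴴ = 1 := by
    have := (Unitary.mem_iff.mp hU).2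
    rwa [Matrix.star_eq_conjTranspose] at this
  have tlUinv : ∀ v : EuclideanSpace ℂ (Fin n × Fin m),
      Matrix.toEuclideanLin Uᴴ (Matrix.toEuclideanLin U v) = v := by
    intro v; rw [← SAA.tl_mul, hU1, SAA.tl_one]
  have tlUinv' : ∀ v : EuclideanSpace ℂ (Fin n × Fin m),
      Matrix.toEuclideanLin U (Matrix.toEuclideanLin Uᴴ v) = v := by
    intro v; rw [← SAA.tl_mul, hU2, SAA.tl_one]
  -- orthogonality facts
  have iMp : ∀ ψ' ∈ 𝒮, ‖ψ'‖ = 1 → ∀ x : EuclideanSpace ℂ (Fin n),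
      (inner ℂ (vecTensor x zero) (Φperp ψ') : ℂ) = 0 := by
    intro ψ' h1' h2' x
    have h0 := hanc ψ' h1' h2'
    rw [SAA.tl_one_kron_P0] at h0
    have hw : SAA.wv zero (Φperp ψ') = 0 := by
      obtain ⟨b, hb⟩ : ∃ b, zero b ≠ 0 := by
        by_contra hc; push_neg at hc; exact hzne (PiLp.ext hc)
      ext a
      have h2 : SAA.wv zero (Φperp ψ') a * zero b = 0 := congrArg (fun v => v (a, b)) h0
      exact (mul_eq_zero.mp h2).resolve_right hb
    rw [SAA.inner_tensor_w, hw, inner_zero_right]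
  have iMM : ∀ φ ∈ 𝒮, ∀ ψ' ∈ 𝒮,
      (inner ℂ (vecTensor (Matrix.toEuclideanLin M φ) zero)
        (vecTensor (Matrix.toEuclideanLin M ψ') zero) : ℂ) = inner ℂ φ ψ' := by
    intro φ hφ ψ' hψ'
    rw [SAA.tensor_inner, h1, mul_one, SAA.tl_adj', ← SAA.tl_mul]
    exact hM ψ' hψ' φ hφ
  have hsc : (Real.sin θ : ℂ)^2 + (Real.cos θ : ℂ)^2 = 1 := by
    have h := Real.sin_sq_add_cos_sq θ
    calc (Real.sin θ : ℂ)^2 + (Real.cos θ : ℂ)^2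
        = ((Real.sin θ^2 + Real.cos θ^2 : ℝ) : ℂ) := by push_cast; ring
      _ = 1 := by rw [h]; norm_num
  have hcne : (Real.cos θ : ℂ) ≠ 0 := Complex.ofReal_ne_zero.mpr hcos
  have hsne : (Real.sin θ : ℂ) ≠ 0 := Complex.ofReal_ne_zero.mpr hsin
  have hsc' : Complex.sin (θ : ℂ)^2 + Complex.cos (θ : ℂ)^2 = 1 := Complex.sin_sq_add_cos_sq _
  have ipp : ∀ φ ∈ 𝒮, ‖φ‖ = 1 → ∀ ψ' ∈ 𝒮, ‖ψ'‖ = 1 →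
      (inner ℂ (Φperp φ) (Φperp ψ') : ℂ) = inner ℂ φ ψ' := by
    intro φ hφ hφ1 ψ' hψ' hψ'1
    have hpres : (inner ℂ (Matrix.toEuclideanLin U (vecTensor φ zero))
        (Matrix.toEuclideanLin U (vecTensor ψ' zero)) : ℂ)
        = inner ℂ (vecTensor φ zero) (vecTensor ψ' zero) := by
      rw [SAA.tl_adj', ← SAA.tl_mul, hU1, SAA.tl_one]
    rw [hUact φ hφ hφ1, hUact ψ' hψ' hψ'1, rs, rs, rs, rs,
      SAA.tensor_inner, h1, mul_one] at hpres
    have hpM : (inner ℂ (Φperp φ) (vecTensor (Matrix.toEuclideanLin M ψ') zero) : ℂ) = 0 := by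
      rw [← inner_conj_symm, iMp φ hφ hφ1]
      simp
    simp only [inner_add_left, inner_add_right, inner_smul_left, inner_smul_right,
      Complex.conj_ofReal] at hpres
    rw [iMM φ hφ ψ' hψ', iMp ψ' hψ' hψ'1 (Matrix.toEuclideanLin M φ), hpM] at hpres
    have key : ((Real.cos θ : ℂ))^2 * (inner ℂ (Φperp φ) (Φperp ψ') : ℂ)
        = ((Real.cos θ : ℂ))^2 * (inner ℂ φ ψ' : ℂ) := by
      linear_combination hpres - (inner ℂ φ ψ' : ℂ) * hsc
    exact mul_left_cancel₀ (pow_ne_zero 2 hcne) key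
  intro ℓ ψ hψ hψ1
  set Φ := vecTensor (Matrix.toEuclideanLin M ψ) zero with hΦdef
  set Φp := Φperp ψ with hΦpdef
  set Ψ := vecTensor ψ zero with hΨdef
  set Ψp := Matrix.toEuclideanLin Uᴴ
      ((Real.cos θ : ℂ) • Φ - (Real.sin θ : ℂ) • Φp) with hΨpdef
  set A : Matrix (Fin n × Fin m) (Fin n × Fin m) ℂ :=
      (1 : Matrix (Fin n) (Fin n) ℂ) ⊗ₖ ((2 : ℂ) • SAA.P0 zero) - 1 with hAdef
  set B : Matrix (Fin n × Fin m) (Fin n × Fin m) ℂ :=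
      1 - projPerpMatrix 𝒮 ⊗ₖ ((2 : ℂ) • SAA.P0 zero) with hBdef
  set G : Matrix (Fin n × Fin m) (Fin n × Fin m) ℂ := -(U * (A * B) * Uᴴ * A) with hGdef
  -- action of the two-kron pieces
  have hkr : (1 : Matrix (Fin n) (Fin n) ℂ) ⊗ₖ ((2 : ℂ) • SAA.P0 zero)
      = (2 : ℂ) • ((1 : Matrix (Fin n) (Fin n) ℂ) ⊗ₖ SAA.P0 zero) :=
    Matrix.kronecker_smul _ _ _
  have tl_sub : ∀ (X Y : Matrix (Fin n × Fin m) (Fin n × Fin m) ℂ)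
      (v : EuclideanSpace ℂ (Fin n × Fin m)),
      Matrix.toEuclideanLin (X - Y) v
        = Matrix.toEuclideanLin X v - Matrix.toEuclideanLin Y v := by
    intro X Y v; rw [map_sub]; rfl
  have tl_smul2 : ∀ (X : Matrix (Fin n × Fin m) (Fin n × Fin m) ℂ)
      (v : EuclideanSpace ℂ (Fin n × Fin m)),
      Matrix.toEuclideanLin ((2 : ℂ) • X) v = (2 : ℂ) • Matrix.toEuclideanLin X v := by
    intro X v; rw [_root_.map_smul]; rfl
  have fT : ∀ v : EuclideanSpace ℂ (Fin n × Fin m),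
      Matrix.toEuclideanLin ((1 : Matrix (Fin n) (Fin n) ℂ) ⊗ₖ ((2 : ℂ) • SAA.P0 zero)) v
        = (2 : ℂ) • vecTensor (SAA.wv zero v) zero := by
    intro v
    rw [hkr, tl_smul2, SAA.tl_one_kron_P0]
  have fA : ∀ v : EuclideanSpace ℂ (Fin n × Fin m),
      Matrix.toEuclideanLin A v = (2 : ℂ) • vecTensor (SAA.wv zero v) zero - v := by
    intro v
    rw [hAdef, tl_sub, fT, SAA.tl_one]
  have fA_tensor : ∀ x : EuclideanSpace ℂ (Fin n),
      Matrix.toEuclideanLin A (vecTensor x zero) = vecTensor x zero := by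
    intro x
    rw [hAdef, tl_sub, SAA.tl_one, hkr, tl_smul2, SAA.tl_kron, SAA.tl_one, SAA.tl_P0, h1,
      one_smul, two_smul]
    abel
  have fA_perp : Matrix.toEuclideanLin A Φp = -Φp := by
    rw [hAdef, tl_sub, SAA.tl_one, hkr, tl_smul2, hΦpdef, hanc ψ hψ hψ1, smul_zero, zero_sub]
  -- the basic rotation relations
  have fUΨ : Matrix.toEuclideanLin U Ψ = (Real.sin θ : ℂ) • Φ + (Real.cos θ : ℂ) • Φp := by
    rw [hΨdef, hUact ψ hψ hψ1, rs, rs]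
  have fUΨp : Matrix.toEuclideanLin U Ψp = (Real.cos θ : ℂ) • Φ - (Real.sin θ : ℂ) • Φp :=
    tlUinv' _
  have hΦcomb : Φ = (Real.sin θ : ℂ) • Matrix.toEuclideanLin U Ψ
      + (Real.cos θ : ℂ) • Matrix.toEuclideanLin U Ψp := by
    rw [fUΨ, fUΨp]
    match_scalars
    · push_cast
      linear_combination -hsc'
    · push_cast
      ring
  have hΦpcomb : Φp = (Real.cos θ : ℂ) • Matrix.toEuclideanLin U Ψ
      - (Real.sin θ : ℂ) • Matrix.toEuclideanLin U Ψp := by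
    rw [fUΨ, fUΨp]
    match_scalars
    · push_cast
      linear_combination -hsc'
    · push_cast
      ring
  have fUadjΦ : Matrix.toEuclideanLin Uᴴ Φ = (Real.sin θ : ℂ) • Ψ + (Real.cos θ : ℂ) • Ψp := by
    conv_lhs => rw [hΦcomb]
    rw [map_add, _root_.map_smul, _root_.map_smul, tlUinv, tlUinv]
  have fUadjΦp : Matrix.toEuclideanLin Uᴴ Φp
      = (Real.cos θ : ℂ) • Ψ - (Real.sin θ : ℂ) • Ψp := by
    conv_lhs => rw [hΦpcomb]
    rw [map_sub, _root_.map_smul, _root_.map_smul, tlUinv, tlUinv]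
  -- R_Ψ-related facts
  have hBΨ : Matrix.toEuclideanLin B Ψ = Ψ := by
    rw [hBdef, tl_sub, SAA.tl_one, hΨdef, SAA.tl_kron,
      SAA.tl_projPerp_mem 𝒮 hψ, SAA.vecTensor_zero, sub_zero]
  have fABΨ : Matrix.toEuclideanLin (A * B) Ψ = Ψ := by
    rw [SAA.tl_mul, hBΨ, hΨdef, fA_tensor]
  have owU : ∀ φ ∈ 𝒮, ‖φ‖ = 1 →
      (inner ℂ (Matrix.toEuclideanLin U (vecTensor φ zero))
        ((Real.cos θ : ℂ) • Φ - (Real.sin θ : ℂ) • Φp) : ℂ) = 0 := by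
    intro φ hφ hφ1
    rw [hUact φ hφ hφ1, rs, rs, hΦdef, hΦpdef]
    simp only [inner_sub_right, inner_add_left, inner_smul_left, inner_smul_right,
      Complex.conj_ofReal]
    rw [iMM φ hφ ψ hψ, iMp ψ hψ hψ1 (Matrix.toEuclideanLin M φ),
      ipp φ hφ hφ1 ψ hψ hψ1]
    have hpM : (inner ℂ (Φperp φ) (vecTensor (Matrix.toEuclideanLin M ψ) zero) : ℂ) = 0 := by
      rw [← inner_conj_symm, iMp φ hφ hφ1]
      simp
    rw [hpM]
    ring
  have ow : ∀ φ ∈ 𝒮, (inner ℂ φ (SAA.wv zero Ψp) : ℂ) = 0 := by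
    intro φ hφ
    rw [← SAA.inner_tensor_w, hΨpdef, SAA.tl_adj2]
    by_cases h0 : φ = 0
    · subst h0
      rw [SAA.vecTensor_zero, map_zero, inner_zero_left]
    · have hr : ((‖φ‖ : ℂ)) ≠ 0 := by
        simpa using norm_ne_zero_iff.mpr h0
      have hφeq : φ = (‖φ‖ : ℂ) • (((‖φ‖ : ℂ))⁻¹ • φ) := (smul_inv_smul₀ hr φ).symm
      have hmem : ((‖φ‖ : ℂ))⁻¹ • φ ∈ 𝒮 := 𝒮.smul_mem _ hφ
      have hnorm : ‖((‖φ‖ : ℂ))⁻¹ • φ‖ = 1 := by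
        rw [norm_smul, norm_inv, Complex.norm_real, Real.norm_eq_abs,
          abs_of_nonneg (norm_nonneg φ), inv_mul_cancel₀ (norm_ne_zero_iff.mpr h0)]
      conv_lhs => rw [hφeq]
      rw [SAA.vecTensor_smul, _root_.map_smul, inner_smul_left, owU _ hmem hnorm, mul_zero]
  have fQ : Matrix.toEuclideanLin
      (((1 : Matrix (Fin n) (Fin n) ℂ) - projPerpMatrix 𝒮) ⊗ₖ ((2 : ℂ) • SAA.P0 zero)) Ψp
      = 0 := by
    have hfact : ((1 : Matrix (Fin n) (Fin n) ℂ) - projPerpMatrix 𝒮) ⊗ₖ ((2 : ℂ) • SAA.P0 zero)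
        = (((1 : Matrix (Fin n) (Fin n) ℂ) - projPerpMatrix 𝒮) ⊗ₖ (1 : Matrix (Fin m) (Fin m) ℂ))
          * ((1 : Matrix (Fin n) (Fin n) ℂ) ⊗ₖ ((2 : ℂ) • SAA.P0 zero)) := by
      rw [← Matrix.mul_kronecker_mul, mul_one, one_mul]
    rw [hfact, SAA.tl_mul, fT, _root_.map_smul]
    have : Matrix.toEuclideanLin
        (((1 : Matrix (Fin n) (Fin n) ℂ) - projPerpMatrix 𝒮) ⊗ₖ (1 : Matrix (Fin m) (Fin m) ℂ))
        (vecTensor (SAA.wv zero Ψp) zero) = 0 := by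
      rw [SAA.tl_kron, SAA.tl_one]
      have hsub : Matrix.toEuclideanLin ((1 : Matrix (Fin n) (Fin n) ℂ) - projPerpMatrix 𝒮)
          (SAA.wv zero Ψp) = 0 := by
        rw [map_sub, LinearMap.sub_apply, SAA.tl_one, SAA.tl_projPerp_orth 𝒮 ow, sub_self]
      rw [hsub, SAA.vecTensor_zero]
    rw [this, smul_zero]
  have tl_add : ∀ (X Y : Matrix (Fin n × Fin m) (Fin n × Fin m) ℂ)
      (v : EuclideanSpace ℂ (Fin n × Fin m)),
      Matrix.toEuclideanLin (X + Y) v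
        = Matrix.toEuclideanLin X v + Matrix.toEuclideanLin Y v := by
    intro X Y v; rw [map_add]; rfl
  have hPt : Matrix.toEuclideanLin (projPerpMatrix 𝒮 ⊗ₖ ((2 : ℂ) • SAA.P0 zero)) Ψp
      = (2 : ℂ) • vecTensor (SAA.wv zero Ψp) zero := by
    have h : Matrix.toEuclideanLin
        ((1 : Matrix (Fin n) (Fin n) ℂ) ⊗ₖ ((2 : ℂ) • SAA.P0 zero)) Ψp
        = Matrix.toEuclideanLin (projPerpMatrix 𝒮 ⊗ₖ ((2 : ℂ) • SAA.P0 zero)) Ψp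
          + Matrix.toEuclideanLin
            (((1 : Matrix (Fin n) (Fin n) ℂ) - projPerpMatrix 𝒮) ⊗ₖ ((2 : ℂ) • SAA.P0 zero))
            Ψp := by
      rw [← tl_add, ← Matrix.add_kronecker, add_sub_cancel]
    rw [fQ, add_zero] at h
    rw [← h, fT]
  have fBΨp : Matrix.toEuclideanLin B Ψp
      = Ψp - (2 : ℂ) • vecTensor (SAA.wv zero Ψp) zero := by
    rw [hBdef, tl_sub, SAA.tl_one, hPt]
  have fABΨp : Matrix.toEuclideanLin (A * B) Ψp = -Ψp := by
    rw [SAA.tl_mul, fBΨp, map_sub, _root_.map_smul, fA, fA]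
    have hww : SAA.wv zero (vecTensor (SAA.wv zero Ψp) zero) = SAA.wv zero Ψp := by
      ext a
      show ∑ d, conj (zero d) * (SAA.wv zero Ψp a * zero d) = SAA.wv zero Ψp a
      calc ∑ d, conj (zero d) * (SAA.wv zero Ψp a * zero d)
          = SAA.wv zero Ψp a * ∑ d, conj (zero d) * zero d := by
            rw [Finset.mul_sum]; apply Finset.sum_congr rfl; intro d _; ring
        _ = SAA.wv zero Ψp a := by
            rw [← SAA.inner_eq, h1, mul_one]
    rw [hww]
    module
  -- action of one Grover step
  have hGapply : ∀ v : EuclideanSpace ℂ (Fin n × Fin m),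
      Matrix.toEuclideanLin G v
        = -(Matrix.toEuclideanLin U (Matrix.toEuclideanLin (A * B)
            (Matrix.toEuclideanLin Uᴴ (Matrix.toEuclideanLin A v)))) := by
    intro v
    rw [hGdef, map_neg, LinearMap.neg_apply, SAA.tl_mul, SAA.tl_mul, SAA.tl_mul]
  have hC2 : Complex.cos (2 * (θ : ℂ)) = Complex.cos (θ : ℂ)^2 - Complex.sin (θ : ℂ)^2 := by
    rw [Complex.cos_two_mul]
    linear_combination Complex.sin_sq_add_cos_sq (θ : ℂ)
  have hS2 : Complex.sin (2 * (θ : ℂ)) = 2 * Complex.sin (θ : ℂ) * Complex.cos (θ : ℂ) :=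
    Complex.sin_two_mul (θ : ℂ)
  have hstep : ∀ s c : ℂ, Matrix.toEuclideanLin G (s • Φ + c • Φp)
      = (s * (Real.cos (2 * θ) : ℂ) + c * (Real.sin (2 * θ) : ℂ)) • Φ
        + (c * (Real.cos (2 * θ) : ℂ) - s * (Real.sin (2 * θ) : ℂ)) • Φp := by
    intro s c
    have e1 : Matrix.toEuclideanLin A (s • Φ + c • Φp) = s • Φ - c • Φp := by
      rw [map_add, _root_.map_smul, _root_.map_smul, hΦdef, fA_tensor, ← hΦdef, fA_perp]
      module
    have e2 : Matrix.toEuclideanLin Uᴴ (s • Φ - c • Φp)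
        = (s * (Real.sin θ : ℂ) - c * (Real.cos θ : ℂ)) • Ψ
          + (s * (Real.cos θ : ℂ) + c * (Real.sin θ : ℂ)) • Ψp := by
      rw [map_sub, _root_.map_smul, _root_.map_smul, fUadjΦ, fUadjΦp]
      match_scalars <;> ring
    have e3 : Matrix.toEuclideanLin (A * B)
        ((s * (Real.sin θ : ℂ) - c * (Real.cos θ : ℂ)) • Ψ
          + (s * (Real.cos θ : ℂ) + c * (Real.sin θ : ℂ)) • Ψp)
        = (s * (Real.sin θ : ℂ) - c * (Real.cos θ : ℂ)) • Ψ
          - (s * (Real.cos θ : ℂ) + c * (Real.sin θ : ℂ)) • Ψp := by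
      rw [map_add, _root_.map_smul, _root_.map_smul, fABΨ, fABΨp]
      module
    have e4 : Matrix.toEuclideanLin U
        ((s * (Real.sin θ : ℂ) - c * (Real.cos θ : ℂ)) • Ψ
          - (s * (Real.cos θ : ℂ) + c * (Real.sin θ : ℂ)) • Ψp)
        = ((s * (Real.sin θ : ℂ) - c * (Real.cos θ : ℂ)) * (Real.sin θ : ℂ)
            - (s * (Real.cos θ : ℂ) + c * (Real.sin θ : ℂ)) * (Real.cos θ : ℂ)) • Φ
          + ((s * (Real.sin θ : ℂ) - c * (Real.cos θ : ℂ)) * (Real.cos θ : ℂ)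
            + (s * (Real.cos θ : ℂ) + c * (Real.sin θ : ℂ)) * (Real.sin θ : ℂ)) • Φp := by
      rw [map_sub, _root_.map_smul, _root_.map_smul, fUΨ, fUΨp]
      match_scalars <;> ring
    rw [hGapply, e1, e2, e3, e4]
    match_scalars
    · push_cast
      linear_combination -s * hC2 - c * hS2
    · push_cast
      linear_combination -c * hC2 + s * hS2
  -- induction
  induction ℓ with
  | zero =>
    rw [pow_zero, SAA.tl_one]
    have : ((2 * 0 + 1 : ℕ) : ℝ) * θ = θ := by norm_num
    rw [this, fUΨ, rs, rs]
  | succ k ih =>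
    rw [pow_succ', SAA.tl_mul, ih, rs, rs, hstep]
    have hang : ((2 * (k + 1) + 1 : ℕ) : ℝ) * θ = ((2 * k + 1 : ℕ) : ℝ) * θ + 2 * θ := by
      push_cast
      ring
    rw [hang, Real.sin_add, Real.cos_add, rs, rs]
    match_scalars <;> push_cast <;> ring
end

section
/- Suppose the N-site matrix-product operator U built from the site-dependent tensors A₁, …, A_N is unitary. Fix 1 ≤ j ≤ k ≤ N, let σ be a density matrix on the physical space of sites 1..j−1 (a d^{j−1} × d^{j−1} positive-semidefinite matrix of trace 1) and τ a density matrix on sites k+1..N. Define L² ∈ Matrix (Fin D_{j−1}) (Fin D_{j−1}) ℂ by (L²)_{a' a} := Σ_{I, J, J'} σ_{J J'} · conj((P^{I, J'})_{0, a'}) · ((P^{I, J})_{0, a}) (sum over physical multi-indices I, J, J' of sites 1..j−1) and R² ∈ Matrix (Fin D_k) (Fin D_k) ℂ by (R²)_{b b'} := Σ_{I, J, J'} τ_{J J'} · conj((Q^{I, J'})_{b', 0}) · ((Q^{I, J})_{b, 0}) (sum over physical multi-indices of sites k+1..N). Then L² and R² are positive semidefinite, and, with L and R their positive-semidefinite square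 roots, the linear map V_{jk} with matrix entries (V_{jk})_{(a, i⃗, b), j⃗} := Σ_{a', b'} L_{a a'} · (T^{i⃗, j⃗})_{a' b'} · R_{b' b} (i⃗, j⃗ ranging over physical multi-indices of sites j..k) is an isometry: V_{jk}ᴴ * V_{jk} = 1. -/
open Matrix
open scoped ComplexOrder

/-- Ordered product of the site tensors of a (nonuniform) matrix-product operator over the
segment of sites `s, s+1, …, s+len−1`, along the physical multi-indices `i, j`. -/
noncomputable def segProd {d : ℕ} (D : ℕ → ℕ)
    (A : (k : ℕ) → Fin d → Fin d → Matrix (Fin (D k)) (Fin (D (k + 1))) ℂ)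
    (s : ℕ) : (len : ℕ) → (Fin len → Fin d) → (Fin len → Fin d) →
      Matrix (Fin (D s)) (Fin (D (s + len))) ℂ
  | 0, _, _ => (1 : Matrix (Fin (D s)) (Fin (D s)) ℂ)
  | len + 1, i, j =>
      segProd D A s len (fun t => i t.castSucc) (fun t => j t.castSucc) *
        A (s + len) (i (Fin.last len)) (j (Fin.last len))

/-- The positive semidefinite square root of a positive semidefinite matrix (the definition
`Matrix.PosSemidef.sqrt` of the older Mathlib, which has since been removed). -/
noncomputable def Matrix.PosSemidef.sqrt {n : Type*} [Fintype n] [DecidableEq n] {𝕜 : Type*}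
    [RCLike 𝕜] {A : Matrix n n 𝕜} (hA : A.PosSemidef) : Matrix n n 𝕜 :=
  hA.1.eigenvectorUnitary.1 * diagonal ((↑) ∘ (√·) ∘ hA.1.eigenvalues) *
  (star hA.1.eigenvectorUnitary : Matrix n n 𝕜)

lemma Matrix.PosSemidef.posSemidef_sqrt {n : Type*} [Fintype n] [DecidableEq n] {𝕜 : Type*}
    [RCLike 𝕜] {A : Matrix n n 𝕜} (hA : A.PosSemidef) : hA.sqrt.PosSemidef := by
  unfold Matrix.PosSemidef.sqrt
  have hD : (diagonal ((↑) ∘ (√·) ∘ hA.1.eigenvalues) : Matrix n n 𝕜).PosSemidef := by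
    rw [posSemidef_diagonal_iff]
    intro i
    simp only [Function.comp_apply, RCLike.ofReal_nonneg]
    exact Real.sqrt_nonneg _
  exact hD.mul_mul_conjTranspose_same (hA.1.eigenvectorUnitary : Matrix n n 𝕜)

lemma Matrix.PosSemidef.sqrt_mul_self {n : Type*} [Fintype n] [DecidableEq n] {𝕜 : Type*}
    [RCLike 𝕜] {A : Matrix n n 𝕜} (hA : A.PosSemidef) : hA.sqrt * hA.sqrt = A := by
  unfold Matrix.PosSemidef.sqrt
  have hU := Unitary.coe_star_mul_self hA.1.eigenvectorUnitary
  conv_rhs => rw [hA.1.spectral_theorem, Unitary.conjStarAlgAut_apply]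
  simp only [Matrix.mul_assoc]
  rw [← Matrix.mul_assoc (star hA.1.eigenvectorUnitary : Matrix n n 𝕜), hU, Matrix.one_mul,
    ← Matrix.mul_assoc (diagonal _), diagonal_mul_diagonal]
  congr 3
  funext i
  simp only [Function.comp_apply]
  rw [← RCLike.ofReal_mul, Real.mul_self_sqrt (hA.eigenvalues_nonneg i)]

section Aux

variable {d : ℕ} (D : ℕ → ℕ)
    (A : (k : ℕ) → Fin d → Fin d → Matrix (Fin (D k)) (Fin (D (k + 1))) ℂ)

lemma A_cast {n n' : ℕ} (h : n = n') (x y : Fin d) (a : Fin (D n)) (b : Fin (D (n + 1))) :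
    A n x y a b = A n' x y (Fin.cast (congrArg D h) a)
      (Fin.cast (congrArg D (congrArg Nat.succ h)) b) := by subst h; rfl

lemma segProd_append (s l1 : ℕ) : ∀ (l2 : ℕ) (i j : Fin (l1 + l2) → Fin d)
    (a : Fin (D s)) (b : Fin (D (s + l1 + l2))),
    segProd D A s (l1 + l2) i j a (Fin.cast (congrArg D (Nat.add_assoc s l1 l2)) b) =
      ∑ c : Fin (D (s + l1)),
        segProd D A s l1 (fun t => i (Fin.castAdd l2 t)) (fun t => j (Fin.castAdd l2 t)) a c *
        segProd D A (s + l1) l2 (fun t => i (Fin.natAdd l1 t)) (fun t => j (Fin.natAdd l1 t)) c b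
  | 0, i, j, a, b => by
      show segProd D A s l1 i j a _ = _
      simp only [segProd, Matrix.one_apply, mul_ite, mul_one, mul_zero,
        Finset.sum_ite_eq', Finset.mem_univ, if_pos]
      rfl
  | l2 + 1, i, j, a, b => by
      have hca : s + l1 + l2 = s + (l1 + l2) := (Nat.add_assoc s l1 l2)
      show (segProd D A s (l1 + l2) (fun t => i t.castSucc) (fun t => j t.castSucc)
          * A (s + (l1 + l2)) (i (Fin.last (l1 + l2))) (j (Fin.last (l1 + l2)))) a
          (Fin.cast (congrArg D (Nat.add_assoc s l1 (l2+1))) b) = _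
      rw [Matrix.mul_apply, ← Equiv.sum_comp (finCongr (congrArg D hca))]
      have hih : ∀ c'' : Fin (D (s + l1 + l2)),
          segProd D A s (l1 + l2) (fun t => i t.castSucc) (fun t => j t.castSucc) a
            (Fin.cast (congrArg D (Nat.add_assoc s l1 l2)) c'') =
          ∑ c : Fin (D (s + l1)),
            segProd D A s l1 (fun t => i (Fin.castAdd (l2+1) t))
              (fun t => j (Fin.castAdd (l2+1) t)) a c *
            segProd D A (s + l1) l2 (fun t => i ((Fin.natAdd l1 t).castSucc))
              (fun t => j ((Fin.natAdd l1 t).castSucc)) c c'' :=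
        fun c'' => segProd_append s l1 l2 (fun t => i t.castSucc) (fun t => j t.castSucc) a c''
      calc ∑ c'' : Fin (D (s + l1 + l2)),
              segProd D A s (l1 + l2) (fun t => i t.castSucc) (fun t => j t.castSucc) a
                (finCongr (congrArg D hca) c'') *
              A (s + (l1 + l2)) (i (Fin.last (l1 + l2))) (j (Fin.last (l1 + l2)))
                (finCongr (congrArg D hca) c'')
                (Fin.cast (congrArg D (Nat.add_assoc s l1 (l2+1))) b)
          = ∑ c'' : Fin (D (s + l1 + l2)),
              (∑ c : Fin (D (s + l1)),
                segProd D A s l1 (fun t => i (Fin.castAdd (l2+1) t))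
                  (fun t => j (Fin.castAdd (l2+1) t)) a c *
                segProd D A (s + l1) l2 (fun t => i ((Fin.natAdd l1 t).castSucc))
                  (fun t => j ((Fin.natAdd l1 t).castSucc)) c c'') *
              A (s + l1 + l2) (i (Fin.last (l1 + l2))) (j (Fin.last (l1 + l2))) c'' b := by
            refine Finset.sum_congr rfl fun c'' _ => ?_
            rw [show (finCongr (congrArg D hca) c'' : Fin (D (s + (l1+l2)))) =
              Fin.cast (congrArg D (Nat.add_assoc s l1 l2)) c'' from rfl, hih c'',
              A_cast D A hca.symm]
            rfl
        _ = ∑ c : Fin (D (s + l1)),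
              segProd D A s l1 (fun t => i (Fin.castAdd (l2+1) t))
                (fun t => j (Fin.castAdd (l2+1) t)) a c *
              ∑ c'' : Fin (D (s + l1 + l2)),
                segProd D A (s + l1) l2 (fun t => i ((Fin.natAdd l1 t).castSucc))
                  (fun t => j ((Fin.natAdd l1 t).castSucc)) c c'' *
                A (s + l1 + l2) (i (Fin.last (l1 + l2))) (j (Fin.last (l1 + l2))) c'' b := by
            simp only [Finset.sum_mul, Finset.mul_sum, mul_assoc]
            rw [Finset.sum_comm]
        _ = _ := by
            refine Finset.sum_congr rfl fun c _ => ?_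
            congr 1

lemma segProd_s_cast {s s' : ℕ} (h : s = s') (len : ℕ) (i j : Fin len → Fin d)
    (a : Fin (D s)) (b : Fin (D (s + len))) :
    segProd D A s len i j a b = segProd D A s' len i j (Fin.cast (congrArg D h) a)
      (Fin.cast (congrArg (fun n => D (n + len)) h) b) := by subst h; rfl

lemma PTQ_eq (j m r : ℕ) {N : ℕ} (h3 : N = j + m + r)
    (x y : (Fin j → Fin d) × (Fin m → Fin d) × (Fin r → Fin d))
    (a : Fin (D 0)) (bN : Fin (D (0 + N))) (bE : Fin (D (0 + j + m + r)))
    (hDe : D (0 + j + m + r) = D (0 + N)) (hb : bN = Fin.cast hDe bE) :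
    segProd D A 0 N (fun t => Fin.append (Fin.append x.1 x.2.1) x.2.2 (Fin.cast h3 t))
      (fun t => Fin.append (Fin.append y.1 y.2.1) y.2.2 (Fin.cast h3 t)) a bN =
    ∑ z : Fin (D (0 + j)) × Fin (D (0 + j + m)),
      segProd D A 0 j x.1 y.1 a z.1 * segProd D A (0 + j) m x.2.1 y.2.1 z.1 z.2 *
        segProd D A (0 + j + m) r x.2.2 y.2.2 z.2 bE := by
  subst h3
  subst hb
  calc segProd D A 0 ((j + m) + r)
        (fun t => Fin.append (Fin.append x.1 x.2.1) x.2.2 (Fin.cast rfl t))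
        (fun t => Fin.append (Fin.append y.1 y.2.1) y.2.2 (Fin.cast rfl t)) a
        (Fin.cast hDe bE)
      = ∑ c : Fin (D (0 + (j + m))),
          segProd D A 0 (j + m)
            (fun t => Fin.append (Fin.append x.1 x.2.1) x.2.2 (Fin.castAdd r t))
            (fun t => Fin.append (Fin.append y.1 y.2.1) y.2.2 (Fin.castAdd r t)) a c *
          segProd D A (0 + (j + m)) r
            (fun t => Fin.append (Fin.append x.1 x.2.1) x.2.2 (Fin.natAdd (j + m) t))
            (fun t => Fin.append (Fin.append y.1 y.2.1) y.2.2 (Fin.natAdd (j + m) t)) c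
            (Fin.cast (congrArg D (by omega : 0 + j + m + r = 0 + (j + m) + r)) bE) :=
        segProd_append D A 0 (j + m) r
          (fun t => Fin.append (Fin.append x.1 x.2.1) x.2.2 (Fin.cast rfl t))
          (fun t => Fin.append (Fin.append y.1 y.2.1) y.2.2 (Fin.cast rfl t)) a
          (Fin.cast (congrArg D (by omega : 0 + j + m + r = 0 + (j + m) + r)) bE)
    _ = ∑ c : Fin (D (0 + (j + m))),
          segProd D A 0 (j + m) (Fin.append x.1 x.2.1) (Fin.append y.1 y.2.1) a c *
          segProd D A (0 + (j + m)) r x.2.2 y.2.2 c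
            (Fin.cast (congrArg D (by omega : 0 + j + m + r = 0 + (j + m) + r)) bE) := by
        simp only [Fin.append_left, Fin.append_right]
    _ = ∑ c' : Fin (D (0 + j + m)),
          segProd D A 0 (j + m) (Fin.append x.1 x.2.1) (Fin.append y.1 y.2.1) a
            (Fin.cast (congrArg D (by omega : 0 + j + m = 0 + (j + m))) c') *
          segProd D A (0 + (j + m)) r x.2.2 y.2.2
            (Fin.cast (congrArg D (by omega : 0 + j + m = 0 + (j + m))) c')
            (Fin.cast (congrArg D (by omega : 0 + j + m + r = 0 + (j + m) + r)) bE) :=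
        (Equiv.sum_comp (finCongr (congrArg D (by omega : 0 + j + m = 0 + (j + m)))) _).symm
    _ = ∑ c' : Fin (D (0 + j + m)),
          (∑ e : Fin (D (0 + j)),
            segProd D A 0 j x.1 y.1 a e * segProd D A (0 + j) m x.2.1 y.2.1 e c') *
          segProd D A (0 + j + m) r x.2.2 y.2.2 c' bE := by
        refine Finset.sum_congr rfl fun c' _ => ?_
        congr 1
        · calc segProd D A 0 (j + m) (Fin.append x.1 x.2.1) (Fin.append y.1 y.2.1) a
                (Fin.cast (congrArg D (by omega : 0 + j + m = 0 + (j + m))) c')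
              = ∑ e : Fin (D (0 + j)),
                  segProd D A 0 j (fun t => Fin.append x.1 x.2.1 (Fin.castAdd m t))
                    (fun t => Fin.append y.1 y.2.1 (Fin.castAdd m t)) a e *
                  segProd D A (0 + j) m (fun t => Fin.append x.1 x.2.1 (Fin.natAdd j t))
                    (fun t => Fin.append y.1 y.2.1 (Fin.natAdd j t)) e c' :=
                segProd_append D A 0 j m _ _ a c'
            _ = _ := by simp only [Fin.append_left, Fin.append_right]
        · exact segProd_s_cast D A (by omega : 0 + (j + m) = 0 + j + m) r x.2.2 y.2.2
            (Fin.cast (congrArg D (by omega : 0 + j + m = 0 + (j + m))) c')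
            (Fin.cast (congrArg D (by omega : 0 + j + m + r = 0 + (j + m) + r)) bE)
    _ = ∑ z : Fin (D (0 + j)) × Fin (D (0 + j + m)),
          segProd D A 0 j x.1 y.1 a z.1 * segProd D A (0 + j) m x.2.1 y.2.1 z.1 z.2 *
            segProd D A (0 + j + m) r x.2.2 y.2.2 z.2 bE := by
        rw [Fintype.sum_prod_type]
        rw [Finset.sum_comm]
        refine Finset.sum_congr rfl fun c' _ => ?_
        rw [Finset.sum_mul]

end Aux

lemma psdAux {α BL : Type*} [Fintype α] [Fintype BL]
    (σ : Matrix α α ℂ) (hσ : σ.PosSemidef) (P : α → α → BL → ℂ)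
    (Λ : Matrix BL BL ℂ)
    (hΛ : ∀ a' a, Λ a' a = ∑ t : α × α × α,
      σ t.2.1 t.2.2 * star (P t.1 t.2.2 a') * P t.1 t.2.1 a) :
    Λ.PosSemidef := by
  refine Matrix.PosSemidef.of_dotProduct_mulVec_nonneg ?_ ?_
  · ext a a'
    rw [Matrix.conjTranspose_apply, hΛ a a', hΛ a' a, star_sum]
    refine Fintype.sum_equiv
      (Equiv.mk (fun t : α × α × α => (t.1, t.2.2, t.2.1))
        (fun t => (t.1, t.2.2, t.2.1)) (fun t => rfl) (fun t => rfl)) _ _ fun t => ?_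
    simp only [star_mul', star_star, Equiv.coe_fn_mk]
    rw [← hσ.1.apply t.2.2 t.2.1]
    ring
  · intro x
    have key : dotProduct (star x) (Λ.mulVec x) =
        ∑ I : α, dotProduct
          (star fun J => ∑ a : BL, star (P I J a) * star (x a))
          (σ.mulVec (fun J => ∑ a : BL, star (P I J a) * star (x a))) := by
      calc dotProduct (star x) (Λ.mulVec x)
          = ∑ q : BL × BL × α × α × α,
              σ q.2.2.2.1 q.2.2.2.2 * star (P q.2.2.1 q.2.2.2.2 q.1) *
                P q.2.2.1 q.2.2.2.1 q.2.1 * star (x q.1) * x q.2.1 := by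
            simp only [dotProduct, Matrix.mulVec, hΛ, Pi.star_apply,
              Finset.mul_sum, Finset.sum_mul, Fintype.sum_prod_type]
            refine Finset.sum_congr rfl fun a' _ => ?_
            refine Finset.sum_congr rfl fun a _ => ?_
            refine Finset.sum_congr rfl fun I _ => ?_
            refine Finset.sum_congr rfl fun J _ => ?_
            refine Finset.sum_congr rfl fun J' _ => ?_
            ring
        _ = ∑ p : α × α × α × BL × BL,
              σ p.2.1 p.2.2.1 * star (P p.1 p.2.2.1 p.2.2.2.1) *
                P p.1 p.2.1 p.2.2.2.2 * star (x p.2.2.2.1) * x p.2.2.2.2 := by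
            exact Fintype.sum_equiv
              (Equiv.mk
                (fun q : BL × BL × α × α × α => (q.2.2.1, q.2.2.2.1, q.2.2.2.2, q.1, q.2.1))
                (fun p => (p.2.2.2.1, p.2.2.2.2, p.1, p.2.1, p.2.2.1))
                (fun q => rfl) (fun p => rfl)) _ _ (fun q => rfl)
        _ = ∑ I : α, dotProduct
              (star fun J => ∑ a : BL, star (P I J a) * star (x a))
              (σ.mulVec (fun J => ∑ a : BL, star (P I J a) * star (x a))) := by
            rw [Fintype.sum_prod_type]
            refine Finset.sum_congr rfl fun I _ => ?_
            simp only [dotProduct, Matrix.mulVec, Pi.star_apply, star_sum, star_mul',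
              star_star, Finset.mul_sum, Finset.sum_mul, Fintype.sum_prod_type]
            refine Finset.sum_congr rfl fun J _ => ?_
            refine Finset.sum_congr rfl fun J' _ => ?_
            refine Finset.sum_congr rfl fun a _ => ?_
            refine Finset.sum_congr rfl fun a' _ => ?_
            ring
    rw [key]
    exact Finset.sum_nonneg fun I _ => hσ.dotProduct_mulVec_nonneg _

lemma isoAux {α β γ BL BR : Type*} [Fintype α] [Fintype β] [Fintype γ]
    [Fintype BL] [Fintype BR] [DecidableEq α] [DecidableEq β] [DecidableEq γ]
    [DecidableEq BL] [DecidableEq BR]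
    (σ : Matrix α α ℂ) (hσ1 : σ.trace = 1)
    (τ : Matrix γ γ ℂ) (hτ1 : τ.trace = 1)
    (P : α → α → BL → ℂ) (T : β → β → BL → BR → ℂ) (Q : γ → γ → BR → ℂ)
    (hUnit : ∀ (J J' : α) (jv jv' : β) (M M' : γ),
      (∑ x : α × β × γ,
        star (∑ z : BL × BR, P x.1 J' z.1 * T x.2.1 jv' z.1 z.2 * Q x.2.2 M' z.2) *
          (∑ z : BL × BR, P x.1 J z.1 * T x.2.1 jv z.1 z.2 * Q x.2.2 M z.2)) =
        if (J', jv', M') = (J, jv, M) then 1 else 0)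
    (Λ : Matrix BL BL ℂ) (hΛps : Λ.PosSemidef)
    (hΛ : ∀ a' a, Λ a' a = ∑ t : α × α × α,
      σ t.2.1 t.2.2 * star (P t.1 t.2.2 a') * P t.1 t.2.1 a)
    (Ρ : Matrix BR BR ℂ) (hΡps : Ρ.PosSemidef)
    (hΡ : ∀ b b', Ρ b b' = ∑ t : γ × γ × γ,
      τ t.2.1 t.2.2 * star (Q t.1 t.2.2 b') * Q t.1 t.2.1 b) :
    (Matrix.of fun (p : BL × β × BR) (jv : β) =>
        ∑ a' : BL, ∑ b' : BR, hΛps.sqrt p.1 a' * T p.2.1 jv a' b' * hΡps.sqrt b' p.2.2)ᴴ *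
      (Matrix.of fun (p : BL × β × BR) (jv : β) =>
        ∑ a' : BL, ∑ b' : BR, hΛps.sqrt p.1 a' * T p.2.1 jv a' b' * hΡps.sqrt b' p.2.2) =
    (1 : Matrix β β ℂ) := by
  set L := hΛps.sqrt with hLdef
  set R := hΡps.sqrt with hRdef
  have hLL : ∀ a₁ a₂ : BL, (∑ a : BL, star (L a a₁) * L a a₂) = Λ a₁ a₂ := by
    intro a₁ a₂
    calc ∑ a : BL, star (L a a₁) * L a a₂ = ∑ a : BL, L a₁ a * L a a₂ :=
          Finset.sum_congr rfl fun a _ => by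
            rw [hΛps.posSemidef_sqrt.1.apply a₁ a]
      _ = (L * L) a₁ a₂ := (Matrix.mul_apply).symm
      _ = Λ a₁ a₂ := by rw [hLdef, hΛps.sqrt_mul_self]
  have hRR : ∀ b₁ b₂ : BR, (∑ b : BR, star (R b₁ b) * R b₂ b) = Ρ b₂ b₁ := by
    intro b₁ b₂
    calc ∑ b : BR, star (R b₁ b) * R b₂ b = ∑ b : BR, R b₂ b * R b b₁ :=
          Finset.sum_congr rfl fun b _ => by
            rw [hΡps.posSemidef_sqrt.1.apply b b₁]; ring
      _ = (R * R) b₂ b₁ := (Matrix.mul_apply).symm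
      _ = Ρ b₂ b₁ := by rw [hRdef, hΡps.sqrt_mul_self]
  ext jv' jv
  rw [Matrix.mul_apply, Matrix.one_apply]
  simp only [Matrix.conjTranspose_apply, Matrix.of_apply]
  calc ∑ p : BL × β × BR,
        star (∑ a' : BL, ∑ b' : BR, L p.1 a' * T p.2.1 jv' a' b' * R b' p.2.2) *
          (∑ a' : BL, ∑ b' : BR, L p.1 a' * T p.2.1 jv a' b' * R b' p.2.2)
      = ∑ w : (BL × β × BR) × (BL × BR) × (BL × BR),
          star (L w.1.1 w.2.2.1) * star (T w.1.2.1 jv' w.2.2.1 w.2.2.2) *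
            star (R w.2.2.2 w.1.2.2) *
            (L w.1.1 w.2.1.1 * T w.1.2.1 jv w.2.1.1 w.2.1.2 * R w.2.1.2 w.1.2.2) := by
        conv_rhs => rw [Fintype.sum_prod_type]
        refine Finset.sum_congr rfl fun p _ => ?_
        simp only [star_sum, star_mul', Finset.sum_mul, Finset.mul_sum, Fintype.sum_prod_type]
    _ = ∑ u : (β × (BL × BL) × (BR × BR)) × BR × BL,
          (star (L u.2.2 u.1.2.1.1) * L u.2.2 u.1.2.1.2) *
            star (T u.1.1 jv' u.1.2.1.1 u.1.2.2.1) * T u.1.1 jv u.1.2.1.2 u.1.2.2.2 *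
            (star (R u.1.2.2.1 u.2.1) * R u.1.2.2.2 u.2.1) := by
        exact Fintype.sum_equiv
          (Equiv.mk
            (fun w : (BL × β × BR) × (BL × BR) × (BL × BR) =>
              ((w.1.2.1, (w.2.2.1, w.2.1.1), (w.2.2.2, w.2.1.2)), w.1.2.2, w.1.1))
            (fun u => ((u.2.2, u.1.1, u.2.1), (u.1.2.1.2, u.1.2.2.2), (u.1.2.1.1, u.1.2.2.1)))
            (fun w => rfl) (fun u => rfl)) _ _ (fun w => by simp only [Equiv.coe_fn_mk]; ring)
    _ = ∑ u : β × (BL × BL) × (BR × BR),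
          Λ u.2.1.1 u.2.1.2 * star (T u.1 jv' u.2.1.1 u.2.2.1) * T u.1 jv u.2.1.2 u.2.2.2 *
            Ρ u.2.2.2 u.2.2.1 := by
        rw [Fintype.sum_prod_type]
        refine Finset.sum_congr rfl fun u _ => ?_
        rw [← hLL u.2.1.1 u.2.1.2, ← hRR u.2.2.1 u.2.2.2]
        simp only [Finset.sum_mul, Finset.mul_sum, Fintype.sum_prod_type]
    _ = ∑ v : (β × (BL × BL) × (BR × BR)) × (γ × γ × γ) × (α × α × α),
          σ v.2.2.2.1 v.2.2.2.2 * star (P v.2.2.1 v.2.2.2.2 v.1.2.1.1) *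
            P v.2.2.1 v.2.2.2.1 v.1.2.1.2 *
            star (T v.1.1 jv' v.1.2.1.1 v.1.2.2.1) * T v.1.1 jv v.1.2.1.2 v.1.2.2.2 *
            (τ v.2.1.2.1 v.2.1.2.2 * star (Q v.2.1.1 v.2.1.2.2 v.1.2.2.1) *
              Q v.2.1.1 v.2.1.2.1 v.1.2.2.2) := by
        conv_rhs => rw [Fintype.sum_prod_type]
        refine Finset.sum_congr rfl fun u _ => ?_
        rw [hΛ u.2.1.1 u.2.1.2, hΡ u.2.2.2 u.2.2.1]
        simp only [Finset.sum_mul, Finset.mul_sum, Fintype.sum_prod_type]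
    _ = ∑ y : ((α × α) × (γ × γ)) × (α × β × γ) × (BL × BR) × (BL × BR),
          σ y.1.1.1 y.1.1.2 * τ y.1.2.1 y.1.2.2 *
            (star (P y.2.1.1 y.1.1.2 y.2.2.1.1) * star (T y.2.1.2.1 jv' y.2.2.1.1 y.2.2.1.2) *
              star (Q y.2.1.2.2 y.1.2.2 y.2.2.1.2) *
              (P y.2.1.1 y.1.1.1 y.2.2.2.1 * T y.2.1.2.1 jv y.2.2.2.1 y.2.2.2.2 *
                Q y.2.1.2.2 y.1.2.1 y.2.2.2.2)) := by
        exact Fintype.sum_equiv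
          (Equiv.mk
            (fun v : (β × (BL × BL) × (BR × BR)) × (γ × γ × γ) × (α × α × α) =>
              (((v.2.2.2.1, v.2.2.2.2), (v.2.1.2.1, v.2.1.2.2)),
                (v.2.2.1, v.1.1, v.2.1.1), (v.1.2.1.1, v.1.2.2.1), (v.1.2.1.2, v.1.2.2.2)))
            (fun y => ((y.2.1.2.1, (y.2.2.1.1, y.2.2.2.1), (y.2.2.1.2, y.2.2.2.2)),
              (y.2.1.2.2, y.1.2.1, y.1.2.2), (y.2.1.1, y.1.1.1, y.1.1.2)))
            (fun v => rfl) (fun y => rfl)) _ _ (fun v => by simp only [Equiv.coe_fn_mk]; ring)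
    _ = ∑ s : (α × α) × (γ × γ),
          σ s.1.1 s.1.2 * τ s.2.1 s.2.2 *
            (if ((s.1.2 : α), jv', s.2.2) = (s.1.1, jv, s.2.1) then (1 : ℂ) else 0) := by
        rw [Fintype.sum_prod_type]
        refine Finset.sum_congr rfl fun s _ => ?_
        conv_rhs => rw [← hUnit s.1.1 s.1.2 jv jv' s.2.1 s.2.2]
        rw [Finset.mul_sum]
        conv_lhs => rw [Fintype.sum_prod_type]
        refine Finset.sum_congr rfl fun x _ => ?_
        rw [star_sum, Finset.sum_mul_sum]
        rw [Finset.mul_sum]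
        conv_lhs => rw [Fintype.sum_prod_type]
        refine Finset.sum_congr rfl fun z' _ => ?_
        rw [Finset.mul_sum]
        refine Finset.sum_congr rfl fun z _ => ?_
        simp only [star_mul']
    _ = if jv' = jv then 1 else 0 := by
        by_cases h : jv' = jv
        · subst h
          rw [if_pos rfl]
          have step : ∀ s : (α × α) × (γ × γ),
              σ s.1.1 s.1.2 * τ s.2.1 s.2.2 *
                (if ((s.1.2 : α), jv', s.2.2) = (s.1.1, jv', s.2.1) then (1 : ℂ) else 0) =
              (if s.1.2 = s.1.1 then σ s.1.1 s.1.2 else 0) *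
                (if s.2.2 = s.2.1 then τ s.2.1 s.2.2 else 0) := by
            intro s
            by_cases h1 : s.1.2 = s.1.1 <;> by_cases h2 : s.2.2 = s.2.1 <;>
              simp [h1, h2, Prod.ext_iff]
          simp only [step]
          rw [Fintype.sum_prod_type]
          show (∑ sa : α × α, ∑ sg : γ × γ,
              (if sa.2 = sa.1 then σ sa.1 sa.2 else 0) *
                (if sg.2 = sg.1 then τ sg.1 sg.2 else 0)) = 1
          rw [← Finset.sum_mul_sum]
          have hσt : (∑ sa : α × α, if sa.2 = sa.1 then σ sa.1 sa.2 else 0) = 1 := by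
            rw [Fintype.sum_prod_type]
            calc ∑ J : α, ∑ J' : α, (if J' = J then σ J J' else 0)
                = ∑ J : α, σ J J := by
                  refine Finset.sum_congr rfl fun J _ => ?_
                  simp [Finset.sum_ite_eq']
              _ = 1 := hσ1
          have hτt : (∑ sg : γ × γ, if sg.2 = sg.1 then τ sg.1 sg.2 else 0) = 1 := by
            rw [Fintype.sum_prod_type]
            calc ∑ M : γ, ∑ M' : γ, (if M' = M then τ M M' else 0)
                = ∑ M : γ, τ M M := by
                  refine Finset.sum_congr rfl fun M _ => ?_
                  simp [Finset.sum_ite_eq']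
              _ = 1 := hτ1
          rw [hσt, hτt, one_mul]
        · rw [if_neg h]
          refine Finset.sum_eq_zero fun s _ => ?_
          rw [if_neg, mul_zero]
          intro hc
          exact h (congrArg (fun q => q.2.1) hc)

/-- **Local isometries, general (nonuniform) case** (Lemma 1 of the supplemental
material).  Sites are indexed `0, …, N−1`; the bond dimensions are `D 0 = 1, D 1, …,
D N = 1`.  If the `N`-site MPO built from the tensors `A k` is unitary, then for any
density matrices `σ` (on the sites `0..j−1`) and `τ` (on the sites `j+m..N−1`) the
matrices `L²` and `R²` are positive semidefinite and, with `L, R` their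
positive-semidefinite square roots, the map `V_{jk}` (on the segment of `m` sites
starting at `j`) is an isometry. -/
theorem nonuniform_mpu_local_isometries (d N : ℕ) (hd : 1 ≤ d) (hN : 1 ≤ N)
    (D : ℕ → ℕ) (hD0 : D 0 = 1) (hDN : D N = 1)
    (A : (k : ℕ) → Fin d → Fin d → Matrix (Fin (D k)) (Fin (D (k + 1))) ℂ)
    (hU : (Matrix.of fun I J : Fin N → Fin d =>
        segProd D A 0 N I J ⟨0, by omega⟩ ⟨0, by simp only [Nat.zero_add]; omega⟩) ∈
      Matrix.unitaryGroup (Fin N → Fin d) ℂ)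
    (j m r : ℕ) (hm : 1 ≤ m) (hsum : j + m + r = N)
    (σ : Matrix (Fin j → Fin d) (Fin j → Fin d) ℂ)
    (hσ : σ.PosSemidef) (hσ1 : σ.trace = 1)
    (τ : Matrix (Fin r → Fin d) (Fin r → Fin d) ℂ)
    (hτ : τ.PosSemidef) (hτ1 : τ.trace = 1) :
    ∃ hL : (Matrix.of fun a' a : Fin (D (0 + j)) =>
        ∑ I : Fin j → Fin d, ∑ J : Fin j → Fin d, ∑ J' : Fin j → Fin d,
          σ J J' * star (segProd D A 0 j I J' ⟨0, by omega⟩ a') *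
            (segProd D A 0 j I J ⟨0, by omega⟩ a)).PosSemidef,
    ∃ hR : (Matrix.of fun b b' : Fin (D (0 + j + m)) =>
        ∑ I : Fin r → Fin d, ∑ J : Fin r → Fin d, ∑ J' : Fin r → Fin d,
          τ J J' * star (segProd D A (0 + j + m) r I J' b'
              ⟨0, by rw [show 0 + j + m + r = N by omega]; omega⟩) *
            (segProd D A (0 + j + m) r I J b
              ⟨0, by rw [show 0 + j + m + r = N by omega]; omega⟩)).PosSemidef,
    let V : Matrix (Fin (D (0 + j)) × (Fin m → Fin d) × Fin (D (0 + j + m)))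
        (Fin m → Fin d) ℂ :=
      Matrix.of fun p jv =>
        ∑ a' : Fin (D (0 + j)), ∑ b' : Fin (D (0 + j + m)),
          hL.sqrt p.1 a' * segProd D A (0 + j) m p.2.1 jv a' b' * hR.sqrt b' p.2.2
    Vᴴ * V = 1 := by
  have h3 : N = j + m + r := hsum.symm
  have hz0 : 0 < D 0 := by omega
  have hzN : 0 < D (0 + N) := by simp only [Nat.zero_add]; omega
  have hzE : 0 < D (0 + j + m + r) := by rw [show 0 + j + m + r = N by omega]; omega
  have hDe : D (0 + j + m + r) = D (0 + N) := by rw [show 0 + j + m + r = 0 + N by omega]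
  -- the combination map on physical indices
  have hrec1 : ∀ (x : (Fin j → Fin d) × (Fin m → Fin d) × (Fin r → Fin d)) (t : Fin j),
      Fin.append (Fin.append x.1 x.2.1) x.2.2
        (Fin.cast h3 (Fin.cast h3.symm (Fin.castAdd r (Fin.castAdd m t)))) = x.1 t := by
    intro x t
    show Fin.append (Fin.append x.1 x.2.1) x.2.2 (Fin.castAdd r (Fin.castAdd m t)) = x.1 t
    rw [Fin.append_left, Fin.append_left]
  have hrec2 : ∀ (x : (Fin j → Fin d) × (Fin m → Fin d) × (Fin r → Fin d)) (t : Fin m),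
      Fin.append (Fin.append x.1 x.2.1) x.2.2
        (Fin.cast h3 (Fin.cast h3.symm (Fin.castAdd r (Fin.natAdd j t)))) = x.2.1 t := by
    intro x t
    show Fin.append (Fin.append x.1 x.2.1) x.2.2 (Fin.castAdd r (Fin.natAdd j t)) = x.2.1 t
    rw [Fin.append_left, Fin.append_right]
  have hrec3 : ∀ (x : (Fin j → Fin d) × (Fin m → Fin d) × (Fin r → Fin d)) (t : Fin r),
      Fin.append (Fin.append x.1 x.2.1) x.2.2
        (Fin.cast h3 (Fin.cast h3.symm (Fin.natAdd (j + m) t))) = x.2.2 t := by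
    intro x t
    show Fin.append (Fin.append x.1 x.2.1) x.2.2 (Fin.natAdd (j + m) t) = x.2.2 t
    rw [Fin.append_right]
  have hinj : Function.Injective
      (fun (x : (Fin j → Fin d) × (Fin m → Fin d) × (Fin r → Fin d)) =>
        (fun t : Fin N => Fin.append (Fin.append x.1 x.2.1) x.2.2 (Fin.cast h3 t))) := by
    intro x y hxy
    obtain ⟨x1, x2, x3⟩ := x
    obtain ⟨y1, y2, y3⟩ := y
    simp only [Prod.mk.injEq]
    refine ⟨funext fun t => ?_, funext fun t => ?_, funext fun t => ?_⟩
    · exact (hrec1 (x1, x2, x3) t).symm.trans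
        ((congrFun hxy (Fin.cast h3.symm (Fin.castAdd r (Fin.castAdd m t)))).trans
          (hrec1 (y1, y2, y3) t))
    · exact (hrec2 (x1, x2, x3) t).symm.trans
        ((congrFun hxy (Fin.cast h3.symm (Fin.castAdd r (Fin.natAdd j t)))).trans
          (hrec2 (y1, y2, y3) t))
    · exact (hrec3 (x1, x2, x3) t).symm.trans
        ((congrFun hxy (Fin.cast h3.symm (Fin.natAdd (j + m) t))).trans
          (hrec3 (y1, y2, y3) t))
  have hbij : Function.Bijective
      (fun (x : (Fin j → Fin d) × (Fin m → Fin d) × (Fin r → Fin d)) =>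
        (fun t : Fin N => Fin.append (Fin.append x.1 x.2.1) x.2.2 (Fin.cast h3 t))) := by
    rw [Fintype.bijective_iff_injective_and_card]
    refine ⟨hinj, ?_⟩
    simp only [Fintype.card_prod, Fintype.card_fun, Fintype.card_fin]
    rw [← pow_add, ← pow_add]
    congr 1
    omega
  -- entrywise unitarity
  have hU1 : ∀ Y' Y : Fin N → Fin d,
      (∑ X : Fin N → Fin d,
        star (segProd D A 0 N X Y' ⟨0, hz0⟩ ⟨0, hzN⟩) *
          segProd D A 0 N X Y ⟨0, hz0⟩ ⟨0, hzN⟩) = if Y' = Y then 1 else 0 := by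
    intro Y' Y
    have h2 := congrFun (congrFun hU.1 Y') Y
    simpa [Matrix.mul_apply, Matrix.conjTranspose_apply, Matrix.one_apply,
      Matrix.star_apply, Matrix.of_apply] using h2
  have ePTQ : ∀ x y : (Fin j → Fin d) × (Fin m → Fin d) × (Fin r → Fin d),
      segProd D A 0 N (fun t => Fin.append (Fin.append x.1 x.2.1) x.2.2 (Fin.cast h3 t))
        (fun t => Fin.append (Fin.append y.1 y.2.1) y.2.2 (Fin.cast h3 t))
        ⟨0, hz0⟩ ⟨0, hzN⟩ =
      ∑ z : Fin (D (0 + j)) × Fin (D (0 + j + m)),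
        segProd D A 0 j x.1 y.1 ⟨0, hz0⟩ z.1 *
          segProd D A (0 + j) m x.2.1 y.2.1 z.1 z.2 *
          segProd D A (0 + j + m) r x.2.2 y.2.2 z.2 ⟨0, hzE⟩ :=
    fun x y => PTQ_eq D A j m r h3 x y ⟨0, hz0⟩ ⟨0, hzN⟩ ⟨0, hzE⟩ hDe rfl
  have hUnit : ∀ (J J' : Fin j → Fin d) (jv jv' : Fin m → Fin d) (M M' : Fin r → Fin d),
      (∑ x : (Fin j → Fin d) × (Fin m → Fin d) × (Fin r → Fin d),
        star (∑ z : Fin (D (0 + j)) × Fin (D (0 + j + m)),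
          segProd D A 0 j x.1 J' ⟨0, hz0⟩ z.1 *
            segProd D A (0 + j) m x.2.1 jv' z.1 z.2 *
            segProd D A (0 + j + m) r x.2.2 M' z.2 ⟨0, hzE⟩) *
          (∑ z : Fin (D (0 + j)) × Fin (D (0 + j + m)),
            segProd D A 0 j x.1 J ⟨0, hz0⟩ z.1 *
              segProd D A (0 + j) m x.2.1 jv z.1 z.2 *
              segProd D A (0 + j + m) r x.2.2 M z.2 ⟨0, hzE⟩)) =
      if (J', jv', M') = (J, jv, M) then 1 else 0 := by
    intro J J' jv jv' M M'
    calc (∑ x : (Fin j → Fin d) × (Fin m → Fin d) × (Fin r → Fin d),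
          star (∑ z : Fin (D (0 + j)) × Fin (D (0 + j + m)),
            segProd D A 0 j x.1 J' ⟨0, hz0⟩ z.1 *
              segProd D A (0 + j) m x.2.1 jv' z.1 z.2 *
              segProd D A (0 + j + m) r x.2.2 M' z.2 ⟨0, hzE⟩) *
            (∑ z : Fin (D (0 + j)) × Fin (D (0 + j + m)),
              segProd D A 0 j x.1 J ⟨0, hz0⟩ z.1 *
                segProd D A (0 + j) m x.2.1 jv z.1 z.2 *
                segProd D A (0 + j + m) r x.2.2 M z.2 ⟨0, hzE⟩))
        = ∑ x : (Fin j → Fin d) × (Fin m → Fin d) × (Fin r → Fin d),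
            star (segProd D A 0 N
                (fun t => Fin.append (Fin.append x.1 x.2.1) x.2.2 (Fin.cast h3 t))
                (fun t => Fin.append (Fin.append J' jv') M' (Fin.cast h3 t))
                ⟨0, hz0⟩ ⟨0, hzN⟩) *
              segProd D A 0 N
                (fun t => Fin.append (Fin.append x.1 x.2.1) x.2.2 (Fin.cast h3 t))
                (fun t => Fin.append (Fin.append J jv) M (Fin.cast h3 t))
                ⟨0, hz0⟩ ⟨0, hzN⟩ := by
          refine Finset.sum_congr rfl fun x _ => ?_
          rw [ePTQ x (J', jv', M'), ePTQ x (J, jv, M)]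
      _ = ∑ X : Fin N → Fin d,
            star (segProd D A 0 N X
                (fun t => Fin.append (Fin.append J' jv') M' (Fin.cast h3 t))
                ⟨0, hz0⟩ ⟨0, hzN⟩) *
              segProd D A 0 N X
                (fun t => Fin.append (Fin.append J jv) M (Fin.cast h3 t))
                ⟨0, hz0⟩ ⟨0, hzN⟩ :=
          Fintype.sum_bijective _ hbij _ _ (fun x => rfl)
      _ = if (fun t : Fin N => Fin.append (Fin.append J' jv') M' (Fin.cast h3 t)) =
            (fun t : Fin N => Fin.append (Fin.append J jv) M (Fin.cast h3 t))
          then 1 else 0 := hU1 _ _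
      _ = if (J', jv', M') = (J, jv, M) then 1 else 0 := by
          by_cases h : ((J', jv', M') : (Fin j → Fin d) × (Fin m → Fin d) × (Fin r → Fin d))
              = (J, jv, M)
          · have h1 : J' = J := (Prod.ext_iff.mp h).1
            have h2 : jv' = jv := (Prod.ext_iff.mp (Prod.ext_iff.mp h).2).1
            have h4 : M' = M := (Prod.ext_iff.mp (Prod.ext_iff.mp h).2).2
            rw [if_pos h, if_pos (by rw [h1, h2, h4])]
          · rw [if_neg h, if_neg (fun hc => h (hinj hc))]
  -- positive semidefiniteness
  have hLeq : ∀ a' a : Fin (D (0 + j)),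
      (Matrix.of fun a' a : Fin (D (0 + j)) =>
        ∑ I : Fin j → Fin d, ∑ J : Fin j → Fin d, ∑ J' : Fin j → Fin d,
          σ J J' * star (segProd D A 0 j I J' ⟨0, by omega⟩ a') *
            (segProd D A 0 j I J ⟨0, by omega⟩ a)) a' a =
      ∑ t : (Fin j → Fin d) × (Fin j → Fin d) × (Fin j → Fin d),
        σ t.2.1 t.2.2 * star (segProd D A 0 j t.1 t.2.2 ⟨0, hz0⟩ a') *
          segProd D A 0 j t.1 t.2.1 ⟨0, hz0⟩ a := by
    intro a' a
    simp only [Matrix.of_apply, Fintype.sum_prod_type]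
  have hL : (Matrix.of fun a' a : Fin (D (0 + j)) =>
      ∑ I : Fin j → Fin d, ∑ J : Fin j → Fin d, ∑ J' : Fin j → Fin d,
        σ J J' * star (segProd D A 0 j I J' ⟨0, by omega⟩ a') *
          (segProd D A 0 j I J ⟨0, by omega⟩ a)).PosSemidef :=
    psdAux σ hσ (fun I J b => segProd D A 0 j I J ⟨0, hz0⟩ b) _ hLeq
  have hReq : ∀ b b' : Fin (D (0 + j + m)),
      (Matrix.of fun b b' : Fin (D (0 + j + m)) =>
        ∑ I : Fin r → Fin d, ∑ J : Fin r → Fin d, ∑ J' : Fin r → Fin d,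
          τ J J' * star (segProd D A (0 + j + m) r I J' b'
              ⟨0, by rw [show 0 + j + m + r = N by omega]; omega⟩) *
            (segProd D A (0 + j + m) r I J b
              ⟨0, by rw [show 0 + j + m + r = N by omega]; omega⟩)) b b' =
      ∑ t : (Fin r → Fin d) × (Fin r → Fin d) × (Fin r → Fin d),
        τ t.2.1 t.2.2 * star (segProd D A (0 + j + m) r t.1 t.2.2 b' ⟨0, hzE⟩) *
          segProd D A (0 + j + m) r t.1 t.2.1 b ⟨0, hzE⟩ := by
    intro b b'
    simp only [Matrix.of_apply, Fintype.sum_prod_type]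
  have hRt : ((Matrix.of fun b b' : Fin (D (0 + j + m)) =>
      ∑ I : Fin r → Fin d, ∑ J : Fin r → Fin d, ∑ J' : Fin r → Fin d,
        τ J J' * star (segProd D A (0 + j + m) r I J' b'
            ⟨0, by rw [show 0 + j + m + r = N by omega]; omega⟩) *
          (segProd D A (0 + j + m) r I J b
            ⟨0, by rw [show 0 + j + m + r = N by omega]; omega⟩))ᵀ).PosSemidef :=
    psdAux τ hτ (fun K M b => segProd D A (0 + j + m) r K M b ⟨0, hzE⟩) _
      (fun b' b => by rw [Matrix.transpose_apply]; exact hReq b b')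
  have hR : (Matrix.of fun b b' : Fin (D (0 + j + m)) =>
      ∑ I : Fin r → Fin d, ∑ J : Fin r → Fin d, ∑ J' : Fin r → Fin d,
        τ J J' * star (segProd D A (0 + j + m) r I J' b'
            ⟨0, by rw [show 0 + j + m + r = N by omega]; omega⟩) *
          (segProd D A (0 + j + m) r I J b
            ⟨0, by rw [show 0 + j + m + r = N by omega]; omega⟩)).PosSemidef := by
    have := hRt.transpose
    rwa [Matrix.transpose_transpose] at this
  refine ⟨hL, hR, ?_⟩
  exact isoAux σ hσ1 τ hτ1
    (fun I J b => segProd D A 0 j I J ⟨0, hz0⟩ b)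
    (fun iv jv a b => segProd D A (0 + j) m iv jv a b)
    (fun K M b => segProd D A (0 + j + m) r K M b ⟨0, hzE⟩)
    hUnit _ hL hLeq _ hR hReq
end
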